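/- arXiv:2203.06065 — 2 statements merged into one kernel-verified Lean document; each statement's English description precedes it below -/
import Mathlib

section
/- (Theorem 1, part 1: sublinear pattern-aware regret.) For each window k, let x*(k) ∈ X₀ satisfy g_i(x*(k)) ≤ 0 for all i. Choose the parameters γ = T^{1/4}, η = √T, and α = (1/2)(β² + 1)·√T. Then for all T ≥ 1 the pattern-aware online energy scheduling algorithm satisfies Σ_{k=1}^K Σ_{t ∈ W_k} f^t(x(t)) ≤ Σ_{k=1}^K Σ_{t ∈ W_k} f^t(x*(k)) + ( K·(β² + 1)·G₁²/2 + 1/2 )·√T; in particular the pattern-aware regret Σ_{k=1}^K Σ_{t ∈ W_k} [f^t(x(t)) − f^t(x*(k))] is O(√T). -/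
/-!
Fix a window and a feasible comparator `z`. Along the run, the potential
`φ j = α ‖z - x_j‖² + ½ ‖Q_j‖² - ½ ‖γ g(x_j)‖²` pays for the regret of each slot up to
`1 / (2ρ)`, where `ρ = 2α - γ²β²`: the proximal objective is `2α`-strongly convex, which gives a
three-point inequality at its minimiser; the queue update bounds the growth of `½ ‖Q‖²` by the
penalty terms; the Lipschitz bound on `g` absorbs the cross term `⟨γ g(x_j), γ g(x_{j+1})⟩`; and
the penalty at `z` is nonpositive. Since `Q_1 = |γ g(x_1)|`, `φ 1 = α ‖z - x_1‖² ≤ α G₁²`, so the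
window costs at most `|W_k| / (2ρ) + α G₁²`. The chosen parameters give `ρ = √T`, and summing
over the windows with `Σ |W_k| = T` gives the bound.
-/

open RealInnerProductSpace Finset

section Convexity

variable {E : Type*} [NormedAddCommGroup E] [InnerProductSpace ℝ E] {s : Set E}

theorem ConvexOn.add_inner_le_of_hasGradientAt [CompleteSpace E] {f : E → ℝ} {x y G : E}
    (hf : ConvexOn ℝ s f) (hx : x ∈ s) (hy : y ∈ s) (hG : HasGradientAt f G x) :
    f x + ⟪G, y - x⟫ ≤ f y := by
  set L := AffineMap.lineMap (k := ℝ) x y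
  have hL : HasDerivAt (f ∘ L) ⟪G, y - x⟫ 0 := by
    have hG' : HasFDerivAt f (InnerProductSpace.toDual ℝ E G) (L 0) := by
      simpa [L] using hG.hasFDerivAt
    simpa using hG'.comp_hasDerivAt 0 AffineMap.hasDerivAt_lineMap
  have hslope := (hf.comp_affineMap L).le_slope_of_hasDerivAt (x := 0) (y := 1)
    (by simpa [L] using hx) (by simpa [L] using hy) one_pos hL
  simp only [slope_def_field, Function.comp_apply, L, AffineMap.lineMap_apply_one,
    AffineMap.lineMap_apply_zero, sub_zero, div_one] at hslope
  linarith

theorem convexOn_finset_sum {ι : Type*} (hs : Convex ℝ s) (t : Finset ι) {f : ι → E → ℝ}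
    (hf : ∀ i ∈ t, ConvexOn ℝ s (f i)) : ConvexOn ℝ s fun w => ∑ i ∈ t, f i w := by
  classical
  induction t using Finset.induction_on with
  | empty => simpa using convexOn_const (0 : ℝ) hs
  | insert a t ha ih =>
    simp only [sum_insert ha]
    exact (hf a (mem_insert_self a t)).add (ih fun i hi => hf i (mem_insert_of_mem hi))

theorem convexOn_inner_sub_add_sum_mul {ι : Type*} [Fintype ι] (hs : Convex ℝ s) (c p : E)
    {a : ι → ℝ} (ha : ∀ i, 0 ≤ a i) {h : ι → E → ℝ} (hh : ∀ i, ConvexOn ℝ s (h i)) :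
    ConvexOn ℝ s fun w => ⟪c, w - p⟫ + ∑ i, a i * h i w := by
  refine (((LinearMap.convexOn (innerₛₗ ℝ c) hs).add_const (-⟪c, p⟫)).add
    (convexOn_finset_sum hs univ fun i _ => (hh i).smul (ha i))).congr fun w _ => ?_
  simp only [Pi.add_apply, innerₛₗ_apply_apply, inner_sub_right, smul_eq_mul]
  ring

theorem StrongConvexOn.add_sq_norm_sub_le_of_isMinOn {f : E → ℝ} {m : ℝ} {a b : E}
    (hf : StrongConvexOn s m f) (ha : a ∈ s) (hmin : IsMinOn f s a) (hb : b ∈ s) :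
    f a + m / 2 * ‖b - a‖ ^ 2 ≤ f b := by
  have hθ : ∀ θ ∈ Set.Ioo (0 : ℝ) 1, f a + (1 - θ) * (m / 2 * ‖b - a‖ ^ 2) ≤ f b := by
    rintro θ ⟨hθ0, hθ1⟩
    have hconv := hf.2 ha hb (sub_nonneg.2 hθ1.le) hθ0.le (sub_add_cancel 1 θ)
    have hmin' :=
      isMinOn_iff.1 hmin _ (hf.1 ha hb (sub_nonneg.2 hθ1.le) hθ0.le (sub_add_cancel 1 θ))
    rw [norm_sub_rev] at hconv
    simp only [smul_eq_mul] at hconv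
    nlinarith
  have hlim : Filter.Tendsto (fun θ : ℝ => f a + (1 - θ) * (m / 2 * ‖b - a‖ ^ 2))
      (nhdsWithin 0 (Set.Ioi 0)) (nhds (f a + m / 2 * ‖b - a‖ ^ 2)) := by
    refine Filter.Tendsto.mono_left ?_ nhdsWithin_le_nhds
    exact (Continuous.tendsto' (by fun_prop) 0 _ (by ring))
  exact le_of_tendsto hlim (Filter.eventually_of_mem (Ioo_mem_nhdsGT one_pos) hθ)

theorem ConvexOn.strongConvexOn_add_mul_sq_norm_sub {ψ : E → ℝ} (hψ : ConvexOn ℝ s ψ)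
    (α : ℝ) (x₀ : E) : StrongConvexOn s (2 * α) fun w => ψ w + α * ‖w - x₀‖ ^ 2 := by
  rw [strongConvexOn_iff_convex]
  have hlin : ConvexOn ℝ s fun w => ψ w + ((-2 * α) • innerₛₗ ℝ x₀) w :=
    hψ.add (LinearMap.convexOn _ hψ.1)
  refine (hlin.add_const (α * ‖x₀‖ ^ 2)).congr fun w _ => ?_
  simp only [Pi.add_apply, LinearMap.smul_apply, innerₛₗ_apply_apply, smul_eq_mul,
    norm_sub_sq_real, real_inner_comm x₀]
  ring

end Convexity

theorem abs_le_max_neg_add {q : ℝ} (hq : 0 ≤ q) (a : ℝ) : |a| ≤ max (-a) (q + a) := by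
  rw [abs_eq_max_neg, max_comm]
  exact max_le_max le_rfl (le_add_of_nonneg_left hq)

theorem max_neg_add_sq_le (q a : ℝ) : max (-a) (q + a) ^ 2 ≤ q ^ 2 + 2 * q * a + 2 * a ^ 2 := by
  rcases max_cases (-a) (q + a) with ⟨h, _⟩ | ⟨h, _⟩ <;> rw [h] <;> nlinarith [sq_nonneg (q + a)]

theorem le_mul_sq_add_inv {ρ : ℝ} (hρ : 0 < ρ) (r : ℝ) : r ≤ ρ / 2 * r ^ 2 + 1 / (2 * ρ) := by
  have h : 0 ≤ (ρ * r - 1) ^ 2 / (2 * ρ) := by positivity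
  have h' : (ρ * r - 1) ^ 2 / (2 * ρ) = ρ / 2 * r ^ 2 + 1 / (2 * ρ) - r := by
    field_simp
    ring
  linarith

theorem neg_inner_le_norm_of_norm_le_one {E : Type*} [NormedAddCommGroup E] [InnerProductSpace ℝ E]
    {G : E} (hG : ‖G‖ ≤ 1) (d : E) : -⟪G, d⟫ ≤ ‖d‖ :=
  calc -⟪G, d⟫ ≤ ‖G‖ * ‖d‖ := (neg_le_abs _).trans (abs_real_inner_le_norm G d)
    _ ≤ ‖d‖ := mul_le_of_le_one_left (norm_nonneg d) hG

theorem Real.rpow_one_div_four_sq {x : ℝ} (hx : 0 ≤ x) : (x ^ ((1 : ℝ) / 4)) ^ 2 = Real.sqrt x := by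
  rw [Real.sqrt_eq_rpow, ← Real.rpow_natCast, ← Real.rpow_mul hx]
  norm_num

theorem Finset.sum_eq_sum_Icc_of_eq_image {M : Type*} [AddCommMonoid M] {W : Finset ℕ}
    {s : ℕ → ℕ} (hW : W = (Icc 1 #W).image s) (h : ℕ → M) :
    ∑ t ∈ W, h t = ∑ j ∈ Icc 1 #W, h (s j) := by
  have hinj : Set.InjOn s (Icc 1 #W) :=
    card_image_iff.1 (by rw [← hW, Nat.card_Icc, Nat.add_sub_cancel])
  conv_lhs => rw [hW]
  exact sum_image hinj

section VirtualQueue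

variable {E ι : Type*} [NormedAddCommGroup E] [InnerProductSpace ℝ E] [Fintype ι]

/-- Slots of a window are numbered `1, …, J`: `P j` is the decision at slot `j`, `G j` the gradient
feedback received there, and `q j` the queue vector after the update at slot `j`. -/
structure IsVirtualQueueRun (S : Set E) (G : ℕ → E) (g : E → EuclideanSpace ℝ ι) (γ α : ℝ)
    (J : ℕ) (P : ℕ → E) (q : ℕ → ι → ℝ) : Prop where
  start_mem : P 1 ∈ S
  queue_zero : ∀ i, q 0 i = 0
  queue_succ : ∀ j, 1 ≤ j → j ≤ J → ∀ i,
    q j i = max (-(γ * g (P j) i)) (q (j - 1) i + γ * g (P j) i)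
  next_mem : ∀ j, 1 ≤ j → j + 1 ≤ J → P (j + 1) ∈ S
  isMinOn_next : ∀ j, 1 ≤ j → j + 1 ≤ J →
    IsMinOn (fun w => ⟪G j, w - P j⟫ + ∑ i, (q j i + γ * g (P j) i) * (γ * g w i)
      + α * ‖w - P j‖ ^ 2) S (P (j + 1))

noncomputable def queuePotential (g : E → EuclideanSpace ℝ ι) (γ α : ℝ) (z : E) (P : ℕ → E)
    (q : ℕ → ι → ℝ) (j : ℕ) : ℝ :=
  α * ‖z - P j‖ ^ 2 + (∑ i, q j i ^ 2) / 2 - (∑ i, (γ * g (P j) i) ^ 2) / 2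

namespace IsVirtualQueueRun

variable {S : Set E} {G : ℕ → E} {g : E → EuclideanSpace ℝ ι} {γ α : ℝ} {J j : ℕ} {P : ℕ → E}
  {q : ℕ → ι → ℝ}

theorem mem (hrun : IsVirtualQueueRun S G g γ α J P q) (hj : 1 ≤ j) (hjJ : j ≤ J) : P j ∈ S := by
  obtain rfl | hj := eq_or_lt_of_le hj
  · exact hrun.start_mem
  · obtain ⟨j, rfl⟩ := Nat.exists_eq_add_one_of_ne_zero (by omega : j ≠ 0)
    exact hrun.next_mem j (by omega) hjJ

theorem queue_nonneg (hrun : IsVirtualQueueRun S G g γ α J P q) (hjJ : j ≤ J) (i : ι) :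
    0 ≤ q j i := by
  induction j with
  | zero => rw [hrun.queue_zero]
  | succ j ih =>
    rw [hrun.queue_succ (j + 1) (by omega) hjJ, Nat.add_sub_cancel]
    exact (abs_nonneg _).trans (abs_le_max_neg_add (ih (by omega)) _)

theorem abs_le_queue (hrun : IsVirtualQueueRun S G g γ α J P q) (hj : 1 ≤ j) (hjJ : j ≤ J)
    (i : ι) : |γ * g (P j) i| ≤ q j i := by
  rw [hrun.queue_succ j hj hjJ i]
  exact abs_le_max_neg_add (hrun.queue_nonneg (by omega) i) _

theorem queuePotential_one (hrun : IsVirtualQueueRun S G g γ α J P q) (hJ : 1 ≤ J) (z : E) :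
    queuePotential g γ α z P q 1 = α * ‖z - P 1‖ ^ 2 := by
  have hq : ∀ i, q 1 i ^ 2 = (γ * g (P 1) i) ^ 2 := fun i => by
    rw [hrun.queue_succ 1 le_rfl hJ i, Nat.sub_self, hrun.queue_zero, zero_add, max_comm,
      ← abs_eq_max_neg, sq_abs]
  simp only [queuePotential, hq, add_sub_cancel_right]

theorem mul_sq_norm_le_queuePotential (hrun : IsVirtualQueueRun S G g γ α J P q) (hj : 1 ≤ j)
    (hjJ : j ≤ J) (z : E) : α * ‖z - P j‖ ^ 2 ≤ queuePotential g γ α z P q j := by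
  have hsq : ∑ i, (γ * g (P j) i) ^ 2 ≤ ∑ i, q j i ^ 2 := sum_le_sum fun i _ => by
    simpa only [sq_abs] using pow_le_pow_left₀ (abs_nonneg _) (hrun.abs_le_queue hj hjJ i) 2
  unfold queuePotential
  linarith

theorem half_sum_sq_queue_succ_le (hrun : IsVirtualQueueRun S G g γ α J P q) (hj : 1 ≤ j)
    (hjJ : j + 1 ≤ J) :
    (∑ i, q (j + 1) i ^ 2) / 2 ≤ (∑ i, q j i ^ 2) / 2 + ∑ i, q j i * (γ * g (P (j + 1)) i)
      + ∑ i, (γ * g (P (j + 1)) i) ^ 2 := by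
  have h : ∑ i, q (j + 1) i ^ 2 ≤ ∑ i, (q j i ^ 2 + 2 * q j i * (γ * g (P (j + 1)) i)
      + 2 * (γ * g (P (j + 1)) i) ^ 2) := sum_le_sum fun i _ => by
    rw [hrun.queue_succ (j + 1) (by omega) hjJ i, Nat.add_sub_cancel]
    exact max_neg_add_sq_le _ _
  simp only [sum_add_distrib, mul_assoc, ← mul_sum] at h
  linarith

variable [CompleteSpace E] {z : E} {β ρ : ℝ}

theorem sub_le_queuePotential_sub (hrun : IsVirtualQueueRun S G g γ α J P q) {F : E → ℝ}
    (hF : ConvexOn ℝ S F) (hFG : HasGradientAt F (G j) (P j)) (hG : ‖G j‖ ≤ 1)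
    (hgconv : ∀ i, ConvexOn ℝ S fun w => g w i)
    (hglip : ∀ x ∈ S, ∀ y ∈ S, ‖g x - g y‖ ≤ β * ‖x - y‖) (hγ : 0 ≤ γ) (hρ : 0 < ρ)
    (hρα : ρ + γ ^ 2 * β ^ 2 ≤ 2 * α) (hz : z ∈ S) (hgz : ∀ i, g z i ≤ 0)
    (hj : 1 ≤ j) (hjJ : j + 1 ≤ J) :
    F (P j) - F z ≤ 1 / (2 * ρ) + queuePotential g γ α z P q j
      - queuePotential g γ α z P q (j + 1) := by
  set u : ι → ℝ := fun i => γ * g (P j) i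
  set v : ι → ℝ := fun i => γ * g (P (j + 1)) i
  set d := P (j + 1) - P j
  have hPj := hrun.mem hj (by omega)
  have hPj' := hrun.mem (j := j + 1) (by omega) hjJ
  have hweight : ∀ i, 0 ≤ q j i + u i := fun i => by
    linarith [neg_abs_le (u i), hrun.abs_le_queue hj (by omega) i]
  have hψ := convexOn_inner_sub_add_sum_mul hF.1 (G j) (P j) hweight
    (h := fun i w => γ * g w i) fun i => (hgconv i).smul hγ
  have hprox := (hψ.strongConvexOn_add_mul_sq_norm_sub α (P j)).add_sq_norm_sub_le_of_isMinOn
    hPj' (hrun.isMinOn_next j hj hjJ) hz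
  have hfirst := hF.add_inner_le_of_hasGradientAt hPj hz hFG
  have hpen : ∑ i, (q j i + u i) * (γ * g z i) ≤ 0 :=
    sum_nonpos fun i _ => mul_nonpos_of_nonneg_of_nonpos (hweight i)
      (mul_nonpos_of_nonneg_of_nonpos hγ (hgz i))
  have hdrift := hrun.half_sum_sq_queue_succ_le hj hjJ
  have hlip : ∑ i, (v i - u i) ^ 2 ≤ γ ^ 2 * β ^ 2 * ‖d‖ ^ 2 :=
    calc ∑ i, (v i - u i) ^ 2 = γ ^ 2 * ‖g (P (j + 1)) - g (P j)‖ ^ 2 := by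
          rw [EuclideanSpace.real_norm_sq_eq, mul_sum]
          exact sum_congr rfl fun i _ => by simp only [u, v, PiLp.sub_apply]; ring
      _ ≤ γ ^ 2 * (β * ‖d‖) ^ 2 := by gcongr; exact hglip _ hPj' _ hPj
      _ = γ ^ 2 * β ^ 2 * ‖d‖ ^ 2 := by ring
  have hcross : ∑ i, (q j i + u i) * v i = ∑ i, q j i * v i + ∑ i, u i * v i := by
    rw [← sum_add_distrib]
    exact sum_congr rfl fun i _ => add_mul _ _ _
  have hsq : ∑ i, v i ^ 2 - ∑ i, u i * v i
      = (∑ i, v i ^ 2) / 2 - (∑ i, u i ^ 2) / 2 + (∑ i, (v i - u i) ^ 2) / 2 := by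
    simp only [← sum_sub_distrib, sum_div, ← sum_add_distrib]
    exact sum_congr rfl fun i _ => by ring
  have hinner := neg_inner_le_norm_of_norm_le_one hG d
  have hamgm := le_mul_sq_add_inv hρ ‖d‖
  have hcoef := mul_le_mul_of_nonneg_right hρα (sq_nonneg ‖d‖)
  simp only [queuePotential]
  linarith

theorem sub_le_queuePotential (hrun : IsVirtualQueueRun S G g γ α J P q) {F : E → ℝ}
    (hF : ConvexOn ℝ S F) (hFG : HasGradientAt F (G J) (P J)) (hG : ‖G J‖ ≤ 1) (hρ : 0 < ρ)
    (hρα : ρ + γ ^ 2 * β ^ 2 ≤ 2 * α) (hz : z ∈ S) (hJ : 1 ≤ J) :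
    F (P J) - F z ≤ 1 / (2 * ρ) + queuePotential g γ α z P q J := by
  have hPJ := hrun.mem hJ le_rfl
  have hfirst := hF.add_inner_le_of_hasGradientAt hPJ hz hFG
  have hinner := neg_inner_le_norm_of_norm_le_one hG (z - P J)
  have hamgm := le_mul_sq_add_inv hρ ‖z - P J‖
  have hcoef := mul_le_mul_of_nonneg_right (by nlinarith [sq_nonneg (γ * β)] : ρ ≤ 2 * α)
    (sq_nonneg ‖z - P J‖)
  have hpot := hrun.mul_sq_norm_le_queuePotential hJ le_rfl z
  linarith

theorem sum_sub_le (hrun : IsVirtualQueueRun S G g γ α J P q) {F : ℕ → E → ℝ}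
    (hF : ∀ j ∈ Icc 1 J, ConvexOn ℝ S (F j)) (hFG : ∀ j ∈ Icc 1 J, HasGradientAt (F j) (G j) (P j))
    (hG : ∀ j ∈ Icc 1 J, ‖G j‖ ≤ 1) (hgconv : ∀ i, ConvexOn ℝ S fun w => g w i)
    (hglip : ∀ x ∈ S, ∀ y ∈ S, ‖g x - g y‖ ≤ β * ‖x - y‖) (hγ : 0 ≤ γ) (hρ : 0 < ρ)
    (hρα : ρ + γ ^ 2 * β ^ 2 ≤ 2 * α) (hz : z ∈ S) (hgz : ∀ i, g z i ≤ 0) :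
    ∑ j ∈ Icc 1 J, (F j (P j) - F j z) ≤ J / (2 * ρ) + α * ‖z - P 1‖ ^ 2 := by
  have htelescope : ∀ N, N + 1 ≤ J → ∑ j ∈ Icc 1 N, (F j (P j) - F j z)
      ≤ N / (2 * ρ) + queuePotential g γ α z P q 1 - queuePotential g γ α z P q (N + 1) := by
    intro N
    induction N with
    | zero => intro; simp
    | succ N ih =>
      intro hN
      have hmem : N + 1 ∈ Icc 1 J := mem_Icc.2 ⟨by omega, by omega⟩
      rw [sum_Icc_succ_top (by omega), Nat.cast_succ, add_div]
      linarith [ih (by omega), hrun.sub_le_queuePotential_sub (hF _ hmem) (hFG _ hmem) (hG _ hmem)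
        hgconv hglip hγ hρ hρα hz hgz (by omega) hN]
  cases J with
  | zero =>
    have hα : 0 ≤ α := by nlinarith [sq_nonneg (γ * β)]
    simp only [Icc_eq_empty_of_lt one_pos, sum_empty, CharP.cast_eq_zero, zero_div, zero_add]
    positivity
  | succ N =>
    have hmem : N + 1 ∈ Icc 1 (N + 1) := mem_Icc.2 ⟨by omega, le_rfl⟩
    rw [sum_Icc_succ_top (by omega), ← hrun.queuePotential_one (by omega), Nat.cast_succ, add_div]
    linarith [htelescope N le_rfl, hrun.sub_le_queuePotential (hF _ hmem) (hFG _ hmem) (hG _ hmem)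
      hρ hρα hz (by omega)]

theorem sum_window_sub_le {W : Finset ℕ} {σ : ℕ → ℕ} (hW : W = (Icc 1 #W).image σ)
    {f : ℕ → E → ℝ} {grad : ℕ → E → E} {x : ℕ → E} {D : ℝ}
    (hrun : IsVirtualQueueRun S (fun j => grad (σ j) (x (σ j))) g γ α #W (fun j => x (σ j)) q)
    (hf : ∀ t ∈ W, ConvexOn ℝ S (f t)) (hgrad : ∀ t ∈ W, ∀ y ∈ S, HasGradientAt (f t) (grad t y) y)
    (hgradbd : ∀ t ∈ W, ∀ y ∈ S, ‖grad t y‖ ≤ 1) (hdiam : ∀ x ∈ S, ∀ y ∈ S, ‖x - y‖ ≤ D)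
    (hgconv : ∀ i, ConvexOn ℝ S fun w => g w i)
    (hglip : ∀ x ∈ S, ∀ y ∈ S, ‖g x - g y‖ ≤ β * ‖x - y‖) (hγ : 0 ≤ γ) (hρ : 0 < ρ)
    (hρα : ρ + γ ^ 2 * β ^ 2 ≤ 2 * α) (hz : z ∈ S) (hgz : ∀ i, g z i ≤ 0) :
    ∑ t ∈ W, f t (x t) - ∑ t ∈ W, f t z ≤ #W / (2 * ρ) + α * D ^ 2 := by
  have hslot : ∀ j ∈ Icc 1 #W, σ j ∈ W := fun j hj => by
    rw [hW]
    exact mem_image_of_mem σ hj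
  have hmem : ∀ j ∈ Icc 1 #W, x (σ j) ∈ S := fun j hj => hrun.mem (mem_Icc.1 hj).1 (mem_Icc.1 hj).2
  have hregret := hrun.sum_sub_le (F := fun j => f (σ j)) (fun j hj => hf _ (hslot j hj))
    (fun j hj => hgrad _ (hslot j hj) _ (hmem j hj))
    (fun j hj => hgradbd _ (hslot j hj) _ (hmem j hj))
    hgconv hglip hγ hρ hρα hz hgz
  have hα : 0 ≤ α := by nlinarith [sq_nonneg (γ * β)]
  have hdist := pow_le_pow_left₀ (norm_nonneg _) (hdiam _ hz _ hrun.start_mem) 2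
  rw [sum_eq_sum_Icc_of_eq_image hW, sum_eq_sum_Icc_of_eq_image hW, ← sum_sub_distrib]
  linarith [mul_le_mul_of_nonneg_left hdist hα]

end IsVirtualQueueRun

end VirtualQueue

theorem stmt6_general {n m : ℕ}
    (X₀ : Set (EuclideanSpace ℝ (Fin n)))
    (hconv : Convex ℝ X₀)
    (G₁ β γ α : ℝ)
    (hdiam : ∀ x ∈ X₀, ∀ y ∈ X₀, ‖x - y‖ ≤ G₁)
    (T : ℕ) (hT : 1 ≤ T)
    -- parameter choices: γ = T^{1/4}, η = √T, α = (1/2)(β² + 1)√T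
    (hγ : γ = (T : ℝ) ^ ((1 : ℝ) / 4))
    (hα : α = (1 / 2) * (β ^ 2 + 1) * Real.sqrt T)
    (f : ℕ → EuclideanSpace ℝ (Fin n) → ℝ)
    (fgrad : ℕ → EuclideanSpace ℝ (Fin n) → EuclideanSpace ℝ (Fin n))
    (hfconv : ∀ t ∈ Finset.Icc 1 T, ConvexOn ℝ Set.univ (f t))
    (hfgrad : ∀ t ∈ Finset.Icc 1 T, ∀ x, HasGradientAt (f t) (fgrad t x) x)
    (hfgradbd : ∀ t ∈ Finset.Icc 1 T, ∀ x ∈ X₀, ‖fgrad t x‖ ≤ 1)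
    (g : EuclideanSpace ℝ (Fin n) → EuclideanSpace ℝ (Fin m))
    (hgconv : ∀ i, ConvexOn ℝ Set.univ (fun x => g x i))
    (hglip : ∀ x ∈ X₀, ∀ y ∈ X₀, ‖g x - g y‖ ≤ β * ‖x - y‖)
    -- the partition {W_1, …, W_K} of the time slots {1, …, T}, each window
    -- enumerated in increasing order by `s k : {1, …, |W_k|} → W_k`
    (K : ℕ)
    (W : ℕ → Finset ℕ)
    (hWdisj : ∀ k ∈ Finset.Icc 1 K, ∀ k' ∈ Finset.Icc 1 K, k ≠ k' →
      Disjoint (W k) (W k'))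
    (hWcover : (Finset.Icc 1 K).biUnion W = Finset.Icc 1 T)
    (s : ℕ → ℕ → ℕ)
    (hsimg : ∀ k ∈ Finset.Icc 1 K, W k = (Finset.Icc 1 (W k).card).image (s k))
    -- the virtual-queue algorithm run independently within each window
    -- (queues reset to 0 at the start of each window)
    (x : ℕ → EuclideanSpace ℝ (Fin n))
    (Q : ℕ → ℕ → Fin m → ℝ)
    (hx1 : ∀ k ∈ Finset.Icc 1 K, x (s k 1) ∈ X₀)
    (hQ0 : ∀ k ∈ Finset.Icc 1 K, ∀ i, Q k 0 i = 0)
    (hQ : ∀ k ∈ Finset.Icc 1 K, ∀ j, 1 ≤ j → j ≤ (W k).card → ∀ i,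
      Q k j i = max (-(γ * g (x (s k j)) i)) (Q k (j - 1) i + γ * g (x (s k j)) i))
    (hxupd : ∀ k ∈ Finset.Icc 1 K, ∀ j, 1 ≤ j → j + 1 ≤ (W k).card →
      x (s k (j + 1)) ∈ X₀ ∧
      ∀ z ∈ X₀,
        ⟪fgrad (s k j) (x (s k j)), x (s k (j + 1)) - x (s k j)⟫
            + (∑ i, (Q k j i + γ * g (x (s k j)) i) * (γ * g (x (s k (j + 1))) i))
            + α * ‖x (s k (j + 1)) - x (s k j)‖ ^ 2 ≤
          ⟪fgrad (s k j) (x (s k j)), z - x (s k j)⟫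
            + (∑ i, (Q k j i + γ * g (x (s k j)) i) * (γ * g z i))
            + α * ‖z - x (s k j)‖ ^ 2)
    -- per-window feasible comparators x*(k)
    (xs : ℕ → EuclideanSpace ℝ (Fin n))
    (hxs : ∀ k ∈ Finset.Icc 1 K, xs k ∈ X₀)
    (hfeas : ∀ k ∈ Finset.Icc 1 K, ∀ i, g (xs k) i ≤ 0) :
    ∑ k ∈ Finset.Icc 1 K, ∑ t ∈ W k, f t (x t) ≤
      ∑ k ∈ Finset.Icc 1 K, ∑ t ∈ W k, f t (xs k)
        + ((K : ℝ) * (β ^ 2 + 1) * G₁ ^ 2 / 2 + 1 / 2) * Real.sqrt T := by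
  have hT0 : (0 : ℝ) < T := by exact_mod_cast hT
  have hsqrt : 0 < Real.sqrt T := Real.sqrt_pos.2 hT0
  have hγsq : γ ^ 2 = Real.sqrt T := hγ ▸ Real.rpow_one_div_four_sq hT0.le
  have hγ0 : 0 ≤ γ := hγ ▸ Real.rpow_nonneg hT0.le _
  have hρα : Real.sqrt T + γ ^ 2 * β ^ 2 ≤ 2 * α := by rw [hγsq, hα]; linarith
  have hwindow : ∀ k ∈ Icc 1 K, ∑ t ∈ W k, f t (x t) - ∑ t ∈ W k, f t (xs k)
      ≤ #(W k) / (2 * Real.sqrt T) + α * G₁ ^ 2 := by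
    intro k hk
    have hslots : W k ⊆ Icc 1 T := hWcover ▸ subset_biUnion_of_mem W hk
    have hrun : IsVirtualQueueRun X₀ (fun j => fgrad (s k j) (x (s k j))) g γ α #(W k)
        (fun j => x (s k j)) (Q k) :=
      ⟨hx1 k hk, hQ0 k hk, hQ k hk, fun j hj hjJ => (hxupd k hk j hj hjJ).1,
        fun j hj hjJ => isMinOn_iff.2 (hxupd k hk j hj hjJ).2⟩
    exact hrun.sum_window_sub_le (hsimg k hk)
      (fun t ht => (hfconv t (hslots ht)).subset (Set.subset_univ _) hconv)
      (fun t ht y _ => hfgrad t (hslots ht) y) (fun t ht => hfgradbd t (hslots ht)) hdiam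
      (fun i => (hgconv i).subset (Set.subset_univ _) hconv) hglip hγ0 hsqrt hρα (hxs k hk)
      (hfeas k hk)
  have hcard : ∑ k ∈ Icc 1 K, (#(W k) : ℝ) = T := by
    rw [← Nat.cast_sum, ← card_biUnion hWdisj, hWcover, Nat.card_Icc, Nat.add_sub_cancel]
  have hsum := sum_le_sum hwindow
  rw [sum_sub_distrib, sum_add_distrib, ← sum_div, hcard, sum_const, Nat.card_Icc,
    Nat.add_sub_cancel, nsmul_eq_mul] at hsum
  have hT : (T : ℝ) / (2 * Real.sqrt T) = Real.sqrt T / 2 := by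
    rw [mul_comm, ← div_div, Real.div_sqrt]
  rw [hT, hα] at hsum
  linarith

/-- Theorem 1, part 1 (sublinear pattern-aware regret): with the parameter
choices `γ = T^{1/4}`, `η = √T`, `α = (1/2)(β² + 1)√T`, the pattern-aware online
energy scheduling algorithm — the virtual-queue algorithm run independently
within each window `W_k` of the partition `{W_1,…,W_K}` of `{1,…,T}` — satisfies
`Σ_{k=1}^K Σ_{t ∈ W_k} f^t(x(t)) ≤ Σ_{k=1}^K Σ_{t ∈ W_k} f^t(x*(k))
  + (K(β²+1)G₁²/2 + 1/2)·√T`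
for any per-window feasible comparators `x*(k) ∈ X₀` with `g_i(x*(k)) ≤ 0`;
in particular the pattern-aware regret is `O(√T)`. -/
theorem stmt6 {n m : ℕ}
    (X₀ : Set (EuclideanSpace ℝ (Fin n))) (hne : X₀.Nonempty)
    (hcomp : IsCompact X₀) (hconv : Convex ℝ X₀)
    (G₁ G₂ β γ ε α η : ℝ) (hG₁ : 0 < G₁)
    (hdiam : ∀ x ∈ X₀, ∀ y ∈ X₀, ‖x - y‖ ≤ G₁)
    (T : ℕ) (hT : 1 ≤ T)
    -- parameter choices: γ = T^{1/4}, η = √T, α = (1/2)(β² + 1)√T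
    (hγ : γ = (T : ℝ) ^ ((1 : ℝ) / 4))
    (hη : η = Real.sqrt T)
    (hα : α = (1 / 2) * (β ^ 2 + 1) * Real.sqrt T)
    (f : ℕ → EuclideanSpace ℝ (Fin n) → ℝ)
    (fgrad : ℕ → EuclideanSpace ℝ (Fin n) → EuclideanSpace ℝ (Fin n))
    (hfconv : ∀ t ∈ Finset.Icc 1 T, ConvexOn ℝ Set.univ (f t))
    (hfgrad : ∀ t ∈ Finset.Icc 1 T, ∀ x, HasGradientAt (f t) (fgrad t x) x)
    (hfgradbd : ∀ t ∈ Finset.Icc 1 T, ∀ x ∈ X₀, ‖fgrad t x‖ ≤ 1)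
    (g : EuclideanSpace ℝ (Fin n) → EuclideanSpace ℝ (Fin m))
    (hgconv : ∀ i, ConvexOn ℝ Set.univ (fun x => g x i))
    (hgbd : ∀ x ∈ X₀, ‖g x‖ ≤ G₂)
    (hglip : ∀ x ∈ X₀, ∀ y ∈ X₀, ‖g x - g y‖ ≤ β * ‖x - y‖)
    (hε : 0 < ε)
    (xhat : EuclideanSpace ℝ (Fin n)) (hxhat : xhat ∈ X₀)
    (hslater : ∀ i, g xhat i ≤ -ε)
    -- the partition {W_1, …, W_K} of the time slots {1, …, T}, each window
    -- enumerated in increasing order by `s k : {1, …, |W_k|} → W_k`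
    (K : ℕ) (hK : 1 ≤ K)
    (W : ℕ → Finset ℕ)
    (hWne : ∀ k ∈ Finset.Icc 1 K, (W k).Nonempty)
    (hWdisj : ∀ k ∈ Finset.Icc 1 K, ∀ k' ∈ Finset.Icc 1 K, k ≠ k' →
      Disjoint (W k) (W k'))
    (hWcover : (Finset.Icc 1 K).biUnion W = Finset.Icc 1 T)
    (s : ℕ → ℕ → ℕ)
    (hsmono : ∀ k ∈ Finset.Icc 1 K, StrictMonoOn (s k) (Set.Icc 1 (W k).card))
    (hsimg : ∀ k ∈ Finset.Icc 1 K, W k = (Finset.Icc 1 (W k).card).image (s k))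
    -- the virtual-queue algorithm run independently within each window
    -- (queues reset to 0 at the start of each window)
    (x : ℕ → EuclideanSpace ℝ (Fin n))
    (Q : ℕ → ℕ → Fin m → ℝ)
    (hx1 : ∀ k ∈ Finset.Icc 1 K, x (s k 1) ∈ X₀)
    (hQ0 : ∀ k ∈ Finset.Icc 1 K, ∀ i, Q k 0 i = 0)
    (hQ : ∀ k ∈ Finset.Icc 1 K, ∀ j, 1 ≤ j → j ≤ (W k).card → ∀ i,
      Q k j i = max (-(γ * g (x (s k j)) i)) (Q k (j - 1) i + γ * g (x (s k j)) i))
    (hxupd : ∀ k ∈ Finset.Icc 1 K, ∀ j, 1 ≤ j → j + 1 ≤ (W k).card →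
      x (s k (j + 1)) ∈ X₀ ∧
      ∀ z ∈ X₀,
        ⟪fgrad (s k j) (x (s k j)), x (s k (j + 1)) - x (s k j)⟫
            + (∑ i, (Q k j i + γ * g (x (s k j)) i) * (γ * g (x (s k (j + 1))) i))
            + α * ‖x (s k (j + 1)) - x (s k j)‖ ^ 2 ≤
          ⟪fgrad (s k j) (x (s k j)), z - x (s k j)⟫
            + (∑ i, (Q k j i + γ * g (x (s k j)) i) * (γ * g z i))
            + α * ‖z - x (s k j)‖ ^ 2)
    -- per-window feasible comparators x*(k)
    (xs : ℕ → EuclideanSpace ℝ (Fin n))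
    (hxs : ∀ k ∈ Finset.Icc 1 K, xs k ∈ X₀)
    (hfeas : ∀ k ∈ Finset.Icc 1 K, ∀ i, g (xs k) i ≤ 0) :
    ∑ k ∈ Finset.Icc 1 K, ∑ t ∈ W k, f t (x t) ≤
      ∑ k ∈ Finset.Icc 1 K, ∑ t ∈ W k, f t (xs k)
        + ((K : ℝ) * (β ^ 2 + 1) * G₁ ^ 2 / 2 + 1 / 2) * Real.sqrt T :=
  stmt6_general X₀ hconv G₁ β γ α hdiam T hT hγ hα f fgrad hfconv hfgrad hfgradbd g hgconv hglip K W
    hWdisj hWcover s hsimg x Q hx1 hQ0 hQ hxupd xs hxs hfeas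
end

section
/- (Theorem 1, part 2: constraint violation bound of the pattern-aware algorithm.) Choose the parameters γ = T^{1/4}, η = √T, and α = (1/2)(β² + 1)·√T. Then for all T ≥ 1 and every constraint index i ∈ {1,…,m}, the iterates of the pattern-aware online energy scheduling algorithm satisfy Σ_{k=1}^K Σ_{t ∈ W_k} g_i(x(t)) ≤ 2K·G₂ + K·( (1/2)(β² + 1)G₁² + G₁ + 2G₂² )/ε + K·G₁/(ε·√T); in particular the time-averaged constraint violation is O(1/√T) up to a constant independent of T and asymptotically the per-slot violation approaches zero. -/
/-!
Fix a window and write `Q` for its vector of virtual queues. Telescoping the update gives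
`γ ∑_{t ≤ τ} g_i(x t) ≤ Q_i(τ)`, so it suffices to bound `‖Q‖`. The update satisfies the drift
estimate `‖Q'‖² ≤ ‖Q‖² + 2⟪Q, γ g(x')⟫ + 2γ²G₂²`, and comparing the minimiser `x'` with the Slater
point `x̂` in the objective of the update bounds `⟪Q, γ g(x')⟫` by `C - γε‖Q‖`, where `C` depends
only on `G₁, G₂, α, γ, ε`. Hence `‖Q‖` cannot increase once it exceeds `C / (γε)`, and since it
grows by at most `γG₂` per slot it never exceeds `C / (γε) + γG₂`. With `γ² = √T` and `α ∝ √T`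
this bound on `∑_{t ∈ W_k} g_i(x t)` is `O(1)`, uniformly in `T`.
-/

open RealInnerProductSpace Finset

variable {ι : Type*}

namespace EuclideanSpace
variable [Fintype ι]

lemma norm_le_norm_of_abs_le {u v : EuclideanSpace ℝ ι} (h : ∀ i, |u i| ≤ v i) :
    ‖u‖ ≤ ‖v‖ := by
  refine (sq_le_sq₀ (norm_nonneg u) (norm_nonneg v)).1 ?_
  simp only [real_norm_sq_eq, ← sq_abs (u _)]
  gcongr with i
  exact h i

lemma norm_le_sum_of_nonneg {v : EuclideanSpace ℝ ι} (h : ∀ i, 0 ≤ v i) :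
    ‖v‖ ≤ ∑ i, v i := by
  refine (sq_le_sq₀ (norm_nonneg v) (sum_nonneg fun i _ => h i)).1 ?_
  rw [real_norm_sq_eq]
  exact sum_sq_le_sq_sum_of_nonneg fun i _ => h i

lemma inner_le_neg_mul_norm {p v : EuclideanSpace ℝ ι} {c : ℝ} (hp : ∀ i, 0 ≤ p i)
    (hv : ∀ i, v i ≤ -c) (hc : 0 ≤ c) : ⟪p, v⟫ ≤ -c * ‖p‖ := calc
  ⟪p, v⟫ = ∑ i, p i * v i := by simp [PiLp.inner_apply, mul_comm]
  _ ≤ ∑ i, p i * -c := by gcongr with i; exacts [hp i, hv i]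
  _ = -c * ∑ i, p i := by rw [← sum_mul, mul_comm]
  _ ≤ -c * ‖p‖ := mul_le_mul_of_nonpos_left (norm_le_sum_of_nonneg hp) (neg_nonpos.2 hc)

end EuclideanSpace

lemma le_add_of_drift {α : Type*} [AddCommMonoid α] [LinearOrder α] [IsOrderedAddMonoid α]
    {a : ℕ → α} {θ δ : α} {N : ℕ} (h0 : a 0 ≤ θ) (hδ : 0 ≤ δ)
    (hstep : ∀ j < N, a (j + 1) ≤ a j + δ) (hdrift : ∀ j < N, θ < a j → a (j + 1) ≤ a j) :
    ∀ j ≤ N, a j ≤ θ + δ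
  | 0, _ => le_add_of_le_of_nonneg h0 hδ
  | j + 1, hj => by
    rcases le_or_gt (a j) θ with h | h
    · exact (hstep j hj).trans (add_le_add_left h δ)
    · exact (hdrift j hj h).trans (le_add_of_drift h0 hδ hstep hdrift j (by omega))

def queueStep (q a : EuclideanSpace ℝ ι) : EuclideanSpace ℝ ι :=
  WithLp.toLp 2 fun i => max (-a i) (q i + a i)

section queueStep
variable (q a : EuclideanSpace ℝ ι) (i : ι)

@[simp] lemma queueStep_apply : queueStep q a i = max (-a i) (q i + a i) := rfl

lemma queueStep_add_nonneg : 0 ≤ queueStep q a i + a i := by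
  have := le_max_left (-a i) (q i + a i)
  simp only [queueStep_apply]
  linarith

lemma add_le_queueStep : q i + a i ≤ queueStep q a i := le_max_right _ _

lemma queueStep_nonneg {q : EuclideanSpace ℝ ι} (hq : 0 ≤ q i) : 0 ≤ queueStep q a i := by
  have := le_max_left (-a i) (q i + a i)
  have := le_max_right (-a i) (q i + a i)
  simp only [queueStep_apply]
  linarith

lemma norm_queueStep_le [Fintype ι] {q : EuclideanSpace ℝ ι} (hq : ∀ i, 0 ≤ q i) :
    ‖queueStep q a‖ ≤ ‖q‖ + ‖a‖ := by
  let absA : EuclideanSpace ℝ ι := WithLp.toLp 2 fun i => |a i|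
  have hnorm : ‖absA‖ = ‖a‖ := by simp [absA, EuclideanSpace.norm_eq]
  calc ‖queueStep q a‖ ≤ ‖q + absA‖ := by
        refine EuclideanSpace.norm_le_norm_of_abs_le fun i => abs_le.2 ⟨?_, ?_⟩ <;>
          simp only [queueStep_apply, PiLp.add_apply, absA] <;>
          cases abs_cases (a i) <;> cases max_cases (-a i) (q i + a i) <;> linarith [hq i]
    _ ≤ ‖q‖ + ‖a‖ := hnorm ▸ norm_add_le q absA

lemma norm_queueStep_sq_le [Fintype ι] :
    ‖queueStep q a‖ ^ 2 ≤ ‖q‖ ^ 2 + 2 * ⟪q, a⟫ + 2 * ‖a‖ ^ 2 := by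
  simp only [EuclideanSpace.real_norm_sq_eq, PiLp.inner_apply, mul_sum, ← sum_add_distrib]
  gcongr with i
  simp only [queueStep_apply, RCLike.inner_apply, conj_trivial]
  rcases max_cases (-a i) (q i + a i) with ⟨h, -⟩ | ⟨h, -⟩ <;> rw [h] <;>
    nlinarith [sq_nonneg (q i + a i), sq_nonneg (a i)]

end queueStep

variable [Fintype ι] {E : Type*} [NormedAddCommGroup E] [InnerProductSpace ℝ E]

/-- The algorithm on one window of `N` slots: `y j` is the iterate and `d j` the loss gradient
used in the `j`-th slot (`1 ≤ j ≤ N`), and `q j` the queue vector after that slot. -/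
structure IsQueueRun (X : Set E) (g : E → EuclideanSpace ℝ ι) (γ α : ℝ) (N : ℕ) (y d : ℕ → E)
    (q : ℕ → EuclideanSpace ℝ ι) : Prop where
  mem : ∀ j, 1 ≤ j → j ≤ N → y j ∈ X
  queue_zero : q 0 = 0
  queue_succ : ∀ j < N, q (j + 1) = queueStep (q j) (γ • g (y (j + 1)))
  isMinOn : ∀ j, 1 ≤ j → j < N → IsMinOn
    (fun z => ⟪d j, z - y j⟫ + ⟪q j + γ • g (y j), γ • g z⟫ + α * ‖z - y j‖ ^ 2) X (y (j + 1))

namespace IsQueueRun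

variable {X : Set E} {g : E → EuclideanSpace ℝ ι} {γ α G₁ G₂ ε : ℝ} {N : ℕ} {y d : ℕ → E}
  {q : ℕ → EuclideanSpace ℝ ι}

lemma queue_nonneg (hrun : IsQueueRun X g γ α N y d q) : ∀ j ≤ N, ∀ i, 0 ≤ q j i
  | 0, _, i => by simp [hrun.queue_zero]
  | j + 1, hj, i => by
    rw [hrun.queue_succ j hj]
    exact queueStep_nonneg _ i (hrun.queue_nonneg j (by omega) i)

lemma queue_add_smul_nonneg (hrun : IsQueueRun X g γ α N y d q) {j : ℕ} (hj : 1 ≤ j)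
    (hjN : j ≤ N) (i : ι) : 0 ≤ (q j + γ • g (y j)) i := by
  obtain ⟨j, rfl⟩ := Nat.exists_eq_add_of_le' hj
  rw [hrun.queue_succ j hjN]
  exact queueStep_add_nonneg _ _ i

lemma smul_sum_le_queue (hrun : IsQueueRun X g γ α N y d q) (i : ι) :
    ∀ J ≤ N, γ * ∑ j ∈ Icc 1 J, g (y j) i ≤ q J i
  | 0, _ => by simp [hrun.queue_zero]
  | J + 1, hJ => by
    rw [sum_Icc_succ_top (by omega), mul_add, hrun.queue_succ J hJ]
    have ih := hrun.smul_sum_le_queue i J (by omega)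
    have hstep := add_le_queueStep (q J) (γ • g (y (J + 1))) i
    simp only [PiLp.smul_apply, smul_eq_mul] at hstep
    linarith

lemma norm_succ_le (hrun : IsQueueRun X g γ α N y d q) (hγ : 0 ≤ γ)
    (hgbd : ∀ z ∈ X, ‖g z‖ ≤ G₂) {j : ℕ} (hj : j < N) : ‖q (j + 1)‖ ≤ ‖q j‖ + γ * G₂ := by
  rw [hrun.queue_succ j hj]
  refine (norm_queueStep_le _ (hrun.queue_nonneg j hj.le)).trans ?_
  rw [norm_smul_of_nonneg hγ]
  gcongr
  exact hgbd _ (hrun.mem _ (by omega) hj)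

lemma inner_queue_le (hrun : IsQueueRun X g γ α N y d q) (hγ : 0 ≤ γ) (hα : 0 ≤ α)
    (hε : 0 ≤ ε) (hdiam : ∀ x ∈ X, ∀ z ∈ X, ‖x - z‖ ≤ G₁) (hgbd : ∀ z ∈ X, ‖g z‖ ≤ G₂)
    (hd : ∀ j, 1 ≤ j → j ≤ N → ‖d j‖ ≤ 1) {xhat : E} (hxhat : xhat ∈ X)
    (hslater : ∀ i, g xhat i ≤ -ε) {j : ℕ} (hj : 1 ≤ j) (hjN : j < N) :
    ⟪q j, γ • g (y (j + 1))⟫ ≤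
      2 * G₁ + α * G₁ ^ 2 + γ ^ 2 * G₂ ^ 2 + γ ^ 2 * ε * G₂ - γ * ε * ‖q j‖ := by
  have hyj := hrun.mem j hj hjN.le
  have hyj' := hrun.mem (j + 1) (by omega) hjN
  have hgnorm : ∀ z ∈ X, ‖γ • g z‖ ≤ γ * G₂ := fun z hz => by
    rw [norm_smul_of_nonneg hγ]; exact mul_le_mul_of_nonneg_left (hgbd z hz) hγ
  have hlin : ∀ z ∈ X, |⟪d j, z - y j⟫| ≤ G₁ := fun z hz =>
    (abs_real_inner_le_norm _ _).trans <|
      (mul_le_of_le_one_left (norm_nonneg _) (hd j hj hjN.le)).trans (hdiam z hz _ hyj)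
  have hprox : α * ‖xhat - y j‖ ^ 2 ≤ α * G₁ ^ 2 := by gcongr; exact hdiam _ hxhat _ hyj
  have hcross : -(γ * G₂) ^ 2 ≤ ⟪γ • g (y j), γ • g (y (j + 1))⟫ := by
    have := (abs_real_inner_le_norm (γ • g (y j)) (γ • g (y (j + 1)))).trans <|
      mul_le_mul (hgnorm _ hyj) (hgnorm _ hyj') (norm_nonneg _)
        ((norm_nonneg _).trans (hgnorm _ hyj))
    nlinarith [neg_abs_le ⟪γ • g (y j), γ • g (y (j + 1))⟫]
  have hslater' : ⟪q j + γ • g (y j), γ • g xhat⟫ ≤ -(γ * ε) * ‖q j + γ • g (y j)‖ :=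
    EuclideanSpace.inner_le_neg_mul_norm (hrun.queue_add_smul_nonneg hj hjN.le)
      (fun i => by simp only [PiLp.smul_apply, smul_eq_mul]; nlinarith [hslater i])
      (mul_nonneg hγ hε)
  have hpnorm : ‖q j‖ - γ * G₂ ≤ ‖q j + γ • g (y j)‖ := by
    have := norm_sub_le (q j + γ • g (y j)) (γ • g (y j))
    rw [add_sub_cancel_right] at this
    linarith [hgnorm _ hyj]
  have hopt := isMinOn_iff.1 (hrun.isMinOn j hj hjN) xhat hxhat
  rw [inner_add_left] at hopt
  linarith [mul_le_mul_of_nonneg_left hpnorm (mul_nonneg hγ hε), abs_le.1 (hlin _ hyj'),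
    abs_le.1 (hlin _ hxhat), mul_nonneg hα (sq_nonneg ‖y (j + 1) - y j‖)]

lemma norm_le (hrun : IsQueueRun X g γ α N y d q) (hγ : 0 < γ) (hα : 0 ≤ α)
    (hε : 0 < ε) (hdiam : ∀ x ∈ X, ∀ z ∈ X, ‖x - z‖ ≤ G₁) (hgbd : ∀ z ∈ X, ‖g z‖ ≤ G₂)
    (hd : ∀ j, 1 ≤ j → j ≤ N → ‖d j‖ ≤ 1) {xhat : E} (hxhat : xhat ∈ X)
    (hslater : ∀ i, g xhat i ≤ -ε) :
    ∀ j ≤ N, ‖q j‖ ≤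
      (2 * G₁ + α * G₁ ^ 2 + 2 * γ ^ 2 * G₂ ^ 2 + γ ^ 2 * ε * G₂) / (γ * ε) + γ * G₂ := by
  have hG₁ : 0 ≤ G₁ := (norm_nonneg _).trans (hdiam _ hxhat _ hxhat)
  have hG₂ : 0 ≤ G₂ := (norm_nonneg _).trans (hgbd _ hxhat)
  have hθ : 0 ≤ (2 * G₁ + α * G₁ ^ 2 + 2 * γ ^ 2 * G₂ ^ 2 + γ ^ 2 * ε * G₂) / (γ * ε) := by
    positivity
  refine le_add_of_drift (a := fun j => ‖q j‖) (by simpa [hrun.queue_zero] using hθ)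
    (by positivity) (fun j hj => hrun.norm_succ_le hγ.le hgbd hj) fun j hjN hlt => ?_
  have hj : 1 ≤ j := by
    by_contra! h
    obtain rfl : j = 0 := by omega
    simp only [hrun.queue_zero, norm_zero] at hlt
    linarith
  have hkey := hrun.inner_queue_le hγ.le hα hε.le hdiam hgbd hd hxhat hslater hj hjN
  have hdrift := norm_queueStep_sq_le (q j) (γ • g (y (j + 1)))
  rw [← hrun.queue_succ j hjN] at hdrift
  have hg : ‖γ • g (y (j + 1))‖ ≤ γ * G₂ := by
    rw [norm_smul_of_nonneg hγ.le]
    exact mul_le_mul_of_nonneg_left (hgbd _ (hrun.mem _ (by omega) hjN)) hγ.le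
  have hlt' := (div_lt_iff₀' (mul_pos hγ hε)).1 hlt
  refine (sq_le_sq₀ (norm_nonneg _) (norm_nonneg _)).1 ?_
  nlinarith [norm_nonneg (γ • g (y (j + 1)))]

lemma sum_le (hrun : IsQueueRun X g γ α N y d q) (hγ : 0 < γ) (hα : 0 ≤ α)
    (hε : 0 < ε) (hdiam : ∀ x ∈ X, ∀ z ∈ X, ‖x - z‖ ≤ G₁) (hgbd : ∀ z ∈ X, ‖g z‖ ≤ G₂)
    (hd : ∀ j, 1 ≤ j → j ≤ N → ‖d j‖ ≤ 1) {xhat : E} (hxhat : xhat ∈ X)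
    (hslater : ∀ i, g xhat i ≤ -ε) (i : ι) :
    ∑ j ∈ Icc 1 N, g (y j) i ≤
      (2 * G₁ + α * G₁ ^ 2 + 2 * γ ^ 2 * G₂ ^ 2 + γ ^ 2 * ε * G₂) / (γ ^ 2 * ε) + G₂ := by
  have hqN : q N i ≤ ‖q N‖ := (le_abs_self _).trans (PiLp.norm_apply_le (q N) i)
  have h := (hrun.smul_sum_le_queue i N le_rfl).trans <|
    hqN.trans (hrun.norm_le hγ hα hε hdiam hgbd hd hxhat hslater N le_rfl)
  rw [← le_div_iff₀' hγ] at h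
  refine h.trans_eq ?_
  rw [add_div, div_div, mul_div_cancel_left₀ _ hγ.ne']
  ring

end IsQueueRun

lemma isQueueRun_toLp {X : Set E} {g : E → EuclideanSpace ℝ ι} {γ α : ℝ} {N : ℕ}
    {y d : ℕ → E} {q : ℕ → ι → ℝ} (hy1 : y 1 ∈ X) (hq0 : ∀ i, q 0 i = 0)
    (hq : ∀ j, 1 ≤ j → j ≤ N → ∀ i,
      q j i = max (-(γ * g (y j) i)) (q (j - 1) i + γ * g (y j) i))
    (hmin : ∀ j, 1 ≤ j → j + 1 ≤ N → y (j + 1) ∈ X ∧ ∀ z ∈ X,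
      ⟪d j, y (j + 1) - y j⟫ + (∑ i, (q j i + γ * g (y j) i) * (γ * g (y (j + 1)) i))
          + α * ‖y (j + 1) - y j‖ ^ 2 ≤
        ⟪d j, z - y j⟫ + (∑ i, (q j i + γ * g (y j) i) * (γ * g z i)) + α * ‖z - y j‖ ^ 2) :
    IsQueueRun X g γ α N y d fun j => WithLp.toLp 2 (q j) where
  mem
    | 0, h, _ => absurd h (by omega)
    | 1, _, _ => hy1
    | j + 2, _, hjN => (hmin (j + 1) (by omega) hjN).1
  queue_zero := by ext i; exact hq0 i
  queue_succ j hj := by ext i; simpa using hq (j + 1) (by omega) hj i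
  isMinOn j hj hjN := isMinOn_iff.2 fun z hz => by
    simpa [PiLp.inner_apply, mul_comm] using (hmin j hj hjN).2 z hz

/-- The per-window bound of `IsQueueRun.sum_le` for `γ ^ 2 = r` and `α = (β ^ 2 + 1) r / 2`. -/
lemma window_bound_le {G₁ G₂ β ε r : ℝ} (hG₁ : 0 ≤ G₁) (hε : 0 < ε) (hr : 1 ≤ r) :
    (2 * G₁ + 1 / 2 * (β ^ 2 + 1) * r * G₁ ^ 2 + 2 * r * G₂ ^ 2 + r * ε * G₂) / (r * ε) + G₂ ≤
      2 * G₂ + (1 / 2 * (β ^ 2 + 1) * G₁ ^ 2 + G₁ + 2 * G₂ ^ 2) / ε + G₁ / (ε * r) := by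
  have hr₀ : 0 < r := zero_lt_one.trans_le hr
  have h : G₁ / (ε * r) ≤ G₁ / ε :=
    div_le_div_of_nonneg_left hG₁ hε (le_mul_of_one_le_right hε.le hr)
  have e : (2 * G₁ + 1 / 2 * (β ^ 2 + 1) * r * G₁ ^ 2 + 2 * r * G₂ ^ 2 + r * ε * G₂) / (r * ε)
      + G₂ = 2 * G₂ + (1 / 2 * (β ^ 2 + 1) * G₁ ^ 2 + 2 * G₂ ^ 2) / ε + 2 * (G₁ / (ε * r)) := by
    field_simp
    ring
  have e' : (1 / 2 * (β ^ 2 + 1) * G₁ ^ 2 + G₁ + 2 * G₂ ^ 2) / ε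
      = (1 / 2 * (β ^ 2 + 1) * G₁ ^ 2 + 2 * G₂ ^ 2) / ε + G₁ / ε := by ring
  rw [e, e']
  linarith

theorem stmt7_general {n m : ℕ}
    (X₀ : Set (EuclideanSpace ℝ (Fin n)))
    (G₁ G₂ β γ ε α : ℝ) (hG₁ : 0 < G₁)
    (hdiam : ∀ x ∈ X₀, ∀ y ∈ X₀, ‖x - y‖ ≤ G₁)
    (T : ℕ) (hT : 1 ≤ T)
    -- parameter choices: γ = T^{1/4}, η = √T, α = (1/2)(β² + 1)√T
    (hγ : γ = (T : ℝ) ^ ((1 : ℝ) / 4))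
    (hα : α = (1 / 2) * (β ^ 2 + 1) * Real.sqrt T)
    (fgrad : ℕ → EuclideanSpace ℝ (Fin n) → EuclideanSpace ℝ (Fin n))
    (hfgradbd : ∀ t ∈ Finset.Icc 1 T, ∀ x ∈ X₀, ‖fgrad t x‖ ≤ 1)
    (g : EuclideanSpace ℝ (Fin n) → EuclideanSpace ℝ (Fin m))
    (hgbd : ∀ x ∈ X₀, ‖g x‖ ≤ G₂)
    (hε : 0 < ε)
    (xhat : EuclideanSpace ℝ (Fin n)) (hxhat : xhat ∈ X₀)
    (hslater : ∀ i, g xhat i ≤ -ε)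
    -- the partition {W_1, …, W_K} of the time slots {1, …, T}, each window
    -- enumerated in increasing order by `s k : {1, …, |W_k|} → W_k`
    (K : ℕ)
    (W : ℕ → Finset ℕ)
    (hWcover : (Finset.Icc 1 K).biUnion W = Finset.Icc 1 T)
    (s : ℕ → ℕ → ℕ)
    (hsmono : ∀ k ∈ Finset.Icc 1 K, StrictMonoOn (s k) (Set.Icc 1 (W k).card))
    (hsimg : ∀ k ∈ Finset.Icc 1 K, W k = (Finset.Icc 1 (W k).card).image (s k))
    -- the virtual-queue algorithm run independently within each window
    -- (queues reset to 0 at the start of each window)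
    (x : ℕ → EuclideanSpace ℝ (Fin n))
    (Q : ℕ → ℕ → Fin m → ℝ)
    (hx1 : ∀ k ∈ Finset.Icc 1 K, x (s k 1) ∈ X₀)
    (hQ0 : ∀ k ∈ Finset.Icc 1 K, ∀ i, Q k 0 i = 0)
    (hQ : ∀ k ∈ Finset.Icc 1 K, ∀ j, 1 ≤ j → j ≤ (W k).card → ∀ i,
      Q k j i = max (-(γ * g (x (s k j)) i)) (Q k (j - 1) i + γ * g (x (s k j)) i))
    (hxupd : ∀ k ∈ Finset.Icc 1 K, ∀ j, 1 ≤ j → j + 1 ≤ (W k).card →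
      x (s k (j + 1)) ∈ X₀ ∧
      ∀ z ∈ X₀,
        ⟪fgrad (s k j) (x (s k j)), x (s k (j + 1)) - x (s k j)⟫
            + (∑ i, (Q k j i + γ * g (x (s k j)) i) * (γ * g (x (s k (j + 1))) i))
            + α * ‖x (s k (j + 1)) - x (s k j)‖ ^ 2 ≤
          ⟪fgrad (s k j) (x (s k j)), z - x (s k j)⟫
            + (∑ i, (Q k j i + γ * g (x (s k j)) i) * (γ * g z i))
            + α * ‖z - x (s k j)‖ ^ 2)
    :
    ∀ i, ∑ k ∈ Finset.Icc 1 K, ∑ t ∈ W k, g (x t) i ≤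
      2 * (K : ℝ) * G₂
        + (K : ℝ) * ((1 / 2) * (β ^ 2 + 1) * G₁ ^ 2 + G₁ + 2 * G₂ ^ 2) / ε
        + (K : ℝ) * G₁ / (ε * Real.sqrt T) := by
  intro i
  have hT₁ : (1 : ℝ) ≤ Real.sqrt T := Real.one_le_sqrt.2 (by exact_mod_cast hT)
  have hγ₀ : 0 < γ := hγ ▸ Real.rpow_pos_of_pos (by positivity) _
  have hγsq : γ ^ 2 = Real.sqrt T := by
    rw [hγ, ← Real.rpow_natCast, ← Real.rpow_mul (by positivity), Real.sqrt_eq_rpow]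
    norm_num
  have hα₀ : 0 ≤ α := hα ▸ by positivity
  have hwindow : ∀ k ∈ Finset.Icc 1 K, ∑ t ∈ W k, g (x t) i ≤
      2 * G₂ + ((1 / 2) * (β ^ 2 + 1) * G₁ ^ 2 + G₁ + 2 * G₂ ^ 2) / ε
        + G₁ / (ε * Real.sqrt T) := by
    intro k hk
    have hrun := isQueueRun_toLp (y := fun j => x (s k j))
      (d := fun j => fgrad (s k j) (x (s k j))) (hx1 k hk) (hQ0 k hk) (hQ k hk) (hxupd k hk)
    have hslot : ∀ j ∈ Icc 1 (W k).card, s k j ∈ Icc 1 T := fun j hj =>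
      hWcover ▸ mem_biUnion.2 ⟨k, hk, hsimg k hk ▸ mem_image_of_mem _ hj⟩
    rw [hsimg k hk, sum_image (by simpa using (hsmono k hk).injOn)]
    calc _ ≤ _ := hrun.sum_le hγ₀ hα₀ hε hdiam hgbd
          (fun j hj hjN => hfgradbd _ (hslot j (mem_Icc.2 ⟨hj, hjN⟩)) _ (hrun.mem j hj hjN))
          hxhat hslater i
      _ ≤ _ := by rw [hγsq, hα]; exact window_bound_le hG₁.le hε hT₁
  calc _ ≤ ∑ _k ∈ Icc 1 K, (2 * G₂ + ((1 / 2) * (β ^ 2 + 1) * G₁ ^ 2 + G₁ + 2 * G₂ ^ 2) / ε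
        + G₁ / (ε * Real.sqrt T)) := sum_le_sum hwindow
    _ = _ := by simp only [sum_const, Nat.card_Icc, add_tsub_cancel_right, nsmul_eq_mul]; ring

/-- Theorem 1, part 2 (constraint violation bound of the pattern-aware
algorithm): with the parameter choices `γ = T^{1/4}`, `η = √T`,
`α = (1/2)(β² + 1)√T`, for all `T ≥ 1` and every constraint index `i`, the
iterates of the pattern-aware online energy scheduling algorithm satisfy
`Σ_{k=1}^K Σ_{t ∈ W_k} g_i(x(t)) ≤ 2KG₂ + K((1/2)(β²+1)G₁² + G₁ + 2G₂²)/ε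
  + KG₁/(ε√T)`;
in particular the time-averaged constraint violation is `O(1/√T)` and the
per-slot violation asymptotically approaches zero. -/
theorem stmt7 {n m : ℕ}
    (X₀ : Set (EuclideanSpace ℝ (Fin n))) (hne : X₀.Nonempty)
    (hcomp : IsCompact X₀) (hconv : Convex ℝ X₀)
    (G₁ G₂ β γ ε α η : ℝ) (hG₁ : 0 < G₁)
    (hdiam : ∀ x ∈ X₀, ∀ y ∈ X₀, ‖x - y‖ ≤ G₁)
    (T : ℕ) (hT : 1 ≤ T)
    -- parameter choices: γ = T^{1/4}, η = √T, α = (1/2)(β² + 1)√T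
    (hγ : γ = (T : ℝ) ^ ((1 : ℝ) / 4))
    (hη : η = Real.sqrt T)
    (hα : α = (1 / 2) * (β ^ 2 + 1) * Real.sqrt T)
    (f : ℕ → EuclideanSpace ℝ (Fin n) → ℝ)
    (fgrad : ℕ → EuclideanSpace ℝ (Fin n) → EuclideanSpace ℝ (Fin n))
    (hfconv : ∀ t ∈ Finset.Icc 1 T, ConvexOn ℝ Set.univ (f t))
    (hfgrad : ∀ t ∈ Finset.Icc 1 T, ∀ x, HasGradientAt (f t) (fgrad t x) x)
    (hfgradbd : ∀ t ∈ Finset.Icc 1 T, ∀ x ∈ X₀, ‖fgrad t x‖ ≤ 1)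
    (g : EuclideanSpace ℝ (Fin n) → EuclideanSpace ℝ (Fin m))
    (hgconv : ∀ i, ConvexOn ℝ Set.univ (fun x => g x i))
    (hgbd : ∀ x ∈ X₀, ‖g x‖ ≤ G₂)
    (hglip : ∀ x ∈ X₀, ∀ y ∈ X₀, ‖g x - g y‖ ≤ β * ‖x - y‖)
    (hε : 0 < ε)
    (xhat : EuclideanSpace ℝ (Fin n)) (hxhat : xhat ∈ X₀)
    (hslater : ∀ i, g xhat i ≤ -ε)
    -- the partition {W_1, …, W_K} of the time slots {1, …, T}, each window
    -- enumerated in increasing order by `s k : {1, …, |W_k|} → W_k`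
    (K : ℕ) (hK : 1 ≤ K)
    (W : ℕ → Finset ℕ)
    (hWne : ∀ k ∈ Finset.Icc 1 K, (W k).Nonempty)
    (hWdisj : ∀ k ∈ Finset.Icc 1 K, ∀ k' ∈ Finset.Icc 1 K, k ≠ k' →
      Disjoint (W k) (W k'))
    (hWcover : (Finset.Icc 1 K).biUnion W = Finset.Icc 1 T)
    (s : ℕ → ℕ → ℕ)
    (hsmono : ∀ k ∈ Finset.Icc 1 K, StrictMonoOn (s k) (Set.Icc 1 (W k).card))
    (hsimg : ∀ k ∈ Finset.Icc 1 K, W k = (Finset.Icc 1 (W k).card).image (s k))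
    -- the virtual-queue algorithm run independently within each window
    -- (queues reset to 0 at the start of each window)
    (x : ℕ → EuclideanSpace ℝ (Fin n))
    (Q : ℕ → ℕ → Fin m → ℝ)
    (hx1 : ∀ k ∈ Finset.Icc 1 K, x (s k 1) ∈ X₀)
    (hQ0 : ∀ k ∈ Finset.Icc 1 K, ∀ i, Q k 0 i = 0)
    (hQ : ∀ k ∈ Finset.Icc 1 K, ∀ j, 1 ≤ j → j ≤ (W k).card → ∀ i,
      Q k j i = max (-(γ * g (x (s k j)) i)) (Q k (j - 1) i + γ * g (x (s k j)) i))
    (hxupd : ∀ k ∈ Finset.Icc 1 K, ∀ j, 1 ≤ j → j + 1 ≤ (W k).card →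
      x (s k (j + 1)) ∈ X₀ ∧
      ∀ z ∈ X₀,
        ⟪fgrad (s k j) (x (s k j)), x (s k (j + 1)) - x (s k j)⟫
            + (∑ i, (Q k j i + γ * g (x (s k j)) i) * (γ * g (x (s k (j + 1))) i))
            + α * ‖x (s k (j + 1)) - x (s k j)‖ ^ 2 ≤
          ⟪fgrad (s k j) (x (s k j)), z - x (s k j)⟫
            + (∑ i, (Q k j i + γ * g (x (s k j)) i) * (γ * g z i))
            + α * ‖z - x (s k j)‖ ^ 2)
    :
    ∀ i, ∑ k ∈ Finset.Icc 1 K, ∑ t ∈ W k, g (x t) i ≤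
      2 * (K : ℝ) * G₂
        + (K : ℝ) * ((1 / 2) * (β ^ 2 + 1) * G₁ ^ 2 + G₁ + 2 * G₂ ^ 2) / ε
        + (K : ℝ) * G₁ / (ε * Real.sqrt T) :=
  stmt7_general X₀ G₁ G₂ β γ ε α hG₁ hdiam T hT hγ hα fgrad hfgradbd g hgbd hε xhat hxhat hslater K
    W hWcover s hsmono hsimg x Q hx1 hQ0 hQ hxupd
end
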